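/- Suppose there exist κ > 0 and ε > 0 such that for every ω = (Z, E, −λ) with dist_F(ω, Ω*) ≤ ε one has dist_F(ω, Ω*) ≤ κ · inf{ ‖AᵀΛ' + U‖_F² + ‖Λ' + V‖_F² + ‖AZ + E − X‖_F² )^{1/2} : U ∈ ∂f(Z), V ∈ ∂g(E) } where Λ' = λ. Then there exist entrywise-positive θ*, β* with (A, θ*, β*) ∈ S(0, A), constants κ' > 0 and ε' > 0, such that for every ω with dist_F(ω, Ω*) ≤ ε', writing ω̃ = T(A, θ*, β*)(ω) and H* for the block operator H built from (A, θ*, β*): dist²_{H*}(ω̃, Ω*) ≤ (κ'/16) ‖ω̃ − ω‖²_{H*}. -/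

import Mathlib

open Matrix

noncomputable section

/-- Frobenius inner product `⟨M, N⟩ = trace (Mᵀ N)`. -/
def finner {a b : ℕ} (M N : Matrix (Fin a) (Fin b) ℝ) : ℝ := (Mᵀ * N).trace

/-- Frobenius norm. -/
def fnorm {a b : ℕ} (M : Matrix (Fin a) (Fin b) ℝ) : ℝ := Real.sqrt (finner M M)

/-- Entrywise positivity of a matrix. -/
def EntrywisePos {a b : ℕ} (M : Matrix (Fin a) (Fin b) ℝ) : Prop := ∀ i j, 0 < M i j

/-- Entrywise reciprocal of a matrix. -/
def recip {a b : ℕ} (M : Matrix (Fin a) (Fin b) ℝ) : Matrix (Fin a) (Fin b) ℝ :=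
  Matrix.of fun i j => (M i j)⁻¹

/-- Convex subdifferential w.r.t. the Frobenius inner product. -/
def subdiff {a b : ℕ} (f : Matrix (Fin a) (Fin b) ℝ → ℝ) (x : Matrix (Fin a) (Fin b) ℝ) :
    Set (Matrix (Fin a) (Fin b) ℝ) :=
  {u | ∀ y, f y ≥ f x + finner u (y - x)}

/-- Spectral norm (largest singular value), via the Euclidean operator characterization. -/
def specNorm {a b : ℕ} (M : Matrix (Fin a) (Fin b) ℝ) : ℝ :=
  sSup {r | ∃ x : Fin b → ℝ, (∑ i, x i ^ 2) = 1 ∧ r = Real.sqrt (∑ i, (M.mulVec x i) ^ 2)}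

/-- Triples ω = (Z, E, Λ) (with Λ standing for −λ). -/
abbrev Triple (m d n : ℕ) :=
  Matrix (Fin d) (Fin n) ℝ × Matrix (Fin m) (Fin n) ℝ × Matrix (Fin m) (Fin n) ℝ

/-- Blockwise Frobenius inner product on triples. -/
def tinner {m d n : ℕ} (ω ω' : Triple m d n) : ℝ :=
  finner ω.1 ω'.1 + finner ω.2.1 ω'.2.1 + finner ω.2.2 ω'.2.2

/-- Blockwise Frobenius norm on triples. -/
def tfnorm {m d n : ℕ} (ω : Triple m d n) : ℝ := Real.sqrt (tinner ω ω)

/-- The linear operator `D(Z) = θ∘Z − Wᵀ(β∘(AZ))`. -/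
def Dop {m d n : ℕ} (A W : Matrix (Fin m) (Fin d) ℝ) (θ : Matrix (Fin d) (Fin n) ℝ)
    (β : Matrix (Fin m) (Fin n) ℝ) (Z : Matrix (Fin d) (Fin n) ℝ) : Matrix (Fin d) (Fin n) ℝ :=
  Matrix.hadamard θ Z - Wᵀ * Matrix.hadamard β (A * Z)

/-- The block operator `H(Z,E,Λ) = (D(Z), β∘E, β⁻¹∘Λ)`. -/
def Hop {m d n : ℕ} (A W : Matrix (Fin m) (Fin d) ℝ) (θ : Matrix (Fin d) (Fin n) ℝ)
    (β : Matrix (Fin m) (Fin n) ℝ) (ω : Triple m d n) : Triple m d n :=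
  (Dop A W θ β ω.1, Matrix.hadamard β ω.2.1, Matrix.hadamard (recip β) ω.2.2)

/-- `F(Z,E,−λ) = (Wᵀλ, λ, AZ+E−X)`. -/
def Fop {m d n : ℕ} (A : Matrix (Fin m) (Fin d) ℝ) (X : Matrix (Fin m) (Fin n) ℝ)
    (W : Matrix (Fin m) (Fin d) ℝ) (ω : Triple m d n) : Triple m d n :=
  (Wᵀ * (-ω.2.2), -ω.2.2, A * ω.1 + ω.2.1 - X)

/-- `G(E') = (Wᵀ(β∘E'), β∘E', 0)`. -/
def Gop {m d n : ℕ} (W : Matrix (Fin m) (Fin d) ℝ) (β : Matrix (Fin m) (Fin n) ℝ)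
    (E' : Matrix (Fin m) (Fin n) ℝ) : Triple m d n :=
  (Wᵀ * Matrix.hadamard β E', Matrix.hadamard β E', 0)

/-- The point `R = Z_k − θ⁻¹∘[Wᵀ(λ_k + β∘(AZ_k+E_k−X))]`. -/
def Rmat {m d n : ℕ} (A : Matrix (Fin m) (Fin d) ℝ) (X : Matrix (Fin m) (Fin n) ℝ)
    (W : Matrix (Fin m) (Fin d) ℝ) (θ : Matrix (Fin d) (Fin n) ℝ) (β : Matrix (Fin m) (Fin n) ℝ)
    (Zk : Matrix (Fin d) (Fin n) ℝ) (Ek lk : Matrix (Fin m) (Fin n) ℝ) :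
    Matrix (Fin d) (Fin n) ℝ :=
  Zk - Matrix.hadamard (recip θ) (Wᵀ * (lk + Matrix.hadamard β (A * Zk + Ek - X)))

/-- The point `S = X − AZ_{k+1} − β⁻¹∘λ_k`. -/
def Smat {m d n : ℕ} (A : Matrix (Fin m) (Fin d) ℝ) (X : Matrix (Fin m) (Fin n) ℝ)
    (β : Matrix (Fin m) (Fin n) ℝ) (Zk1 : Matrix (Fin d) (Fin n) ℝ)
    (lk : Matrix (Fin m) (Fin n) ℝ) : Matrix (Fin m) (Fin n) ℝ :=
  X - A * Zk1 - Matrix.hadamard (recip β) lk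

/-- One D-LADMM step with parameters (W, θ, β): `Z_{k+1}` minimizes
`f(Z) + (1/2)⟨θ∘(Z−R), Z−R⟩`, `E_{k+1}` minimizes `g(E) + (1/2)⟨β∘(E−S), E−S⟩`,
and `λ_{k+1} = λ_k + β∘(AZ_{k+1}+E_{k+1}−X)`. -/
def DLADMMStep {m d n : ℕ} (f : Matrix (Fin d) (Fin n) ℝ → ℝ)
    (g : Matrix (Fin m) (Fin n) ℝ → ℝ) (A : Matrix (Fin m) (Fin d) ℝ)
    (X : Matrix (Fin m) (Fin n) ℝ) (W : Matrix (Fin m) (Fin d) ℝ)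
    (θ : Matrix (Fin d) (Fin n) ℝ) (β : Matrix (Fin m) (Fin n) ℝ)
    (Zk : Matrix (Fin d) (Fin n) ℝ) (Ek lk : Matrix (Fin m) (Fin n) ℝ)
    (Zk1 : Matrix (Fin d) (Fin n) ℝ) (Ek1 lk1 : Matrix (Fin m) (Fin n) ℝ) : Prop :=
  (∀ Z, f Zk1 + (1/2) * finner (Matrix.hadamard θ (Zk1 - Rmat A X W θ β Zk Ek lk))
        (Zk1 - Rmat A X W θ β Zk Ek lk)
      ≤ f Z + (1/2) * finner (Matrix.hadamard θ (Z - Rmat A X W θ β Zk Ek lk))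
        (Z - Rmat A X W θ β Zk Ek lk)) ∧
  (∀ E, g Ek1 + (1/2) * finner (Matrix.hadamard β (Ek1 - Smat A X β Zk1 lk))
        (Ek1 - Smat A X β Zk1 lk)
      ≤ g E + (1/2) * finner (Matrix.hadamard β (E - Smat A X β Zk1 lk))
        (E - Smat A X β Zk1 lk)) ∧
  lk1 = lk + Matrix.hadamard β (A * Zk1 + Ek1 - X)

/-- The KKT / solution set Ω* (stored as triples ω = (Z, E, −λ)). -/
def OmegaStar {m d n : ℕ} (f : Matrix (Fin d) (Fin n) ℝ → ℝ)
    (g : Matrix (Fin m) (Fin n) ℝ → ℝ) (A : Matrix (Fin m) (Fin d) ℝ)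
    (X : Matrix (Fin m) (Fin n) ℝ) : Set (Triple m d n) :=
  {ω | Aᵀ * ω.2.2 ∈ subdiff f ω.1 ∧ ω.2.2 ∈ subdiff g ω.2.1 ∧ A * ω.1 + ω.2.1 = X}

/-- The parameter set `S(σ, A)`. -/
def Sset {m d n : ℕ} (σ : ℝ) (A : Matrix (Fin m) (Fin d) ℝ) :
    Set (Matrix (Fin m) (Fin d) ℝ × Matrix (Fin d) (Fin n) ℝ × Matrix (Fin m) (Fin n) ℝ) :=
  {p | specNorm (p.1 - A) ≤ σ ∧ EntrywisePos p.2.1 ∧ EntrywisePos p.2.2 ∧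
    ∀ Z : Matrix (Fin d) (Fin n) ℝ, Z ≠ 0 → 0 < finner (Dop A p.1 p.2.1 p.2.2 Z) Z}

/-- `dist²_H(ω, S)` where `H` is built from `(W, θ, β)`. -/
def dist2H {m d n : ℕ} (A W : Matrix (Fin m) (Fin d) ℝ) (θ : Matrix (Fin d) (Fin n) ℝ)
    (β : Matrix (Fin m) (Fin n) ℝ) (ω : Triple m d n) (S : Set (Triple m d n)) : ℝ :=
  sInf {r | ∃ ωs ∈ S, r = tinner (ω - ωs) (Hop A W θ β (ω - ωs))}

/-- Frobenius distance of a triple to a set of triples. -/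
def distF {m d n : ℕ} (ω : Triple m d n) (S : Set (Triple m d n)) : ℝ :=
  sInf {r | ∃ ωs ∈ S, r = tfnorm (ω - ωs)}


namespace DLadmmAux

lemma finner_eq_sum {a b : ℕ} (M N : Matrix (Fin a) (Fin b) ℝ) :
    finner M N = ∑ i, ∑ j, M i j * N i j := by
  rw [finner, Matrix.trace]
  simp only [Matrix.diag, Matrix.mul_apply, Matrix.transpose_apply]
  rw [Finset.sum_comm]

lemma finner_comm {a b : ℕ} (M N : Matrix (Fin a) (Fin b) ℝ) : finner M N = finner N M := by
  rw [finner, ← Matrix.trace_transpose, Matrix.transpose_mul, Matrix.transpose_transpose, finner]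

lemma finner_add_left {a b : ℕ} (M M' N : Matrix (Fin a) (Fin b) ℝ) :
    finner (M + M') N = finner M N + finner M' N := by
  simp [finner, Matrix.transpose_add, Matrix.add_mul]

lemma finner_add_right {a b : ℕ} (M N N' : Matrix (Fin a) (Fin b) ℝ) :
    finner M (N + N') = finner M N + finner M N' := by
  simp [finner, Matrix.mul_add]

lemma finner_sub_left {a b : ℕ} (M M' N : Matrix (Fin a) (Fin b) ℝ) :
    finner (M - M') N = finner M N - finner M' N := by
  simp [finner, Matrix.transpose_sub, Matrix.sub_mul]

lemma finner_sub_right {a b : ℕ} (M N N' : Matrix (Fin a) (Fin b) ℝ) :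
    finner M (N - N') = finner M N - finner M N' := by
  simp [finner, Matrix.mul_sub]

lemma finner_smul_left {a b : ℕ} (c : ℝ) (M N : Matrix (Fin a) (Fin b) ℝ) :
    finner (c • M) N = c * finner M N := by
  simp [finner, Matrix.transpose_smul, Matrix.smul_mul]

lemma finner_smul_right {a b : ℕ} (c : ℝ) (M N : Matrix (Fin a) (Fin b) ℝ) :
    finner M (c • N) = c * finner M N := by
  simp [finner, Matrix.mul_smul]

lemma finner_neg_left {a b : ℕ} (M N : Matrix (Fin a) (Fin b) ℝ) :
    finner (-M) N = -finner M N := by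
  simp [finner, Matrix.transpose_neg, Matrix.neg_mul]

lemma finner_neg_right {a b : ℕ} (M N : Matrix (Fin a) (Fin b) ℝ) :
    finner M (-N) = -finner M N := by
  simp [finner, Matrix.mul_neg]

lemma finner_zero_zero {a b : ℕ} : finner (0 : Matrix (Fin a) (Fin b) ℝ) 0 = 0 := by
  simp [finner]

lemma finner_self_nonneg {a b : ℕ} (M : Matrix (Fin a) (Fin b) ℝ) : 0 ≤ finner M M := by
  rw [finner_eq_sum]
  exact Finset.sum_nonneg fun i _ => Finset.sum_nonneg fun j _ => mul_self_nonneg _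

lemma finner_self_pos {a b : ℕ} {M : Matrix (Fin a) (Fin b) ℝ} (h : M ≠ 0) :
    0 < finner M M := by
  have hex : ∃ i j, M i j ≠ 0 := by
    by_contra hc
    push_neg at hc
    exact h (by ext i j; simpa using hc i j)
  obtain ⟨i, j, hij⟩ := hex
  rw [finner_eq_sum]
  have h1 : 0 < M i j * M i j := mul_self_pos.mpr hij
  have h2 : M i j * M i j ≤ ∑ j', M i j' * M i j' :=
    Finset.single_le_sum (fun k _ => mul_self_nonneg (M i k)) (Finset.mem_univ j)
  have h3 : ∑ j', M i j' * M i j' ≤ ∑ i', ∑ j', M i' j' * M i' j' :=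
    Finset.single_le_sum
      (fun k _ => Finset.sum_nonneg fun l _ => mul_self_nonneg (M k l)) (Finset.mem_univ i)
  linarith

lemma finner_mul_left {a b c : ℕ} (A : Matrix (Fin a) (Fin b) ℝ)
    (M : Matrix (Fin b) (Fin c) ℝ) (N : Matrix (Fin a) (Fin c) ℝ) :
    finner (A * M) N = finner M (Aᵀ * N) := by
  rw [finner, Matrix.transpose_mul, Matrix.mul_assoc, finner]

lemma finner_transpose_self {a b : ℕ} (M : Matrix (Fin a) (Fin b) ℝ) :
    finner Mᵀ Mᵀ = finner M M := by
  rw [finner, Matrix.transpose_transpose, Matrix.trace_mul_comm, finner]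

lemma finner_submult {a b c : ℕ} (A : Matrix (Fin a) (Fin b) ℝ) (Z : Matrix (Fin b) (Fin c) ℝ) :
    finner (A * Z) (A * Z) ≤ finner A A * finner Z Z := by
  rw [finner_eq_sum, finner_eq_sum, finner_eq_sum]
  have key : ∀ i j, (A * Z) i j * (A * Z) i j
      ≤ (∑ k, A i k * A i k) * (∑ k, Z k j * Z k j) := by
    intro i j
    have h := Finset.sum_mul_sq_le_sq_mul_sq Finset.univ (fun k => A i k) (fun k => Z k j)
    simpa [Matrix.mul_apply, sq] using h
  calc ∑ i, ∑ j, (A * Z) i j * (A * Z) i j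
      ≤ ∑ i, ∑ j, (∑ k, A i k * A i k) * (∑ k, Z k j * Z k j) :=
        Finset.sum_le_sum fun i _ => Finset.sum_le_sum fun j _ => key i j
    _ = (∑ i, ∑ k, A i k * A i k) * (∑ j, ∑ k, Z k j * Z k j) := by
        simp_rw [← Finset.mul_sum, ← Finset.sum_mul]
    _ = (∑ i, ∑ k, A i k * A i k) * (∑ k, ∑ j, Z k j * Z k j) := by
        congr 1
        rw [Finset.sum_comm]

lemma finner_sub_sq_le {a b : ℕ} (x y : Matrix (Fin a) (Fin b) ℝ) :
    finner (x - y) (x - y) ≤ 2 * finner x x + 2 * finner y y := by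
  have h1 : 0 ≤ finner (x + y) (x + y) := finner_self_nonneg _
  have h2 : finner (x + y) (x + y)
      = finner x x + finner x y + finner y x + finner y y := by
    rw [finner_add_left, finner_add_right, finner_add_right]; ring
  have h3 : finner (x - y) (x - y)
      = finner x x - finner x y - finner y x + finner y y := by
    rw [finner_sub_left, finner_sub_right, finner_sub_right]; ring
  linarith

lemma finner_add_sq_le {a b : ℕ} (x y : Matrix (Fin a) (Fin b) ℝ) :
    finner (x + y) (x + y) ≤ 2 * finner x x + 2 * finner y y := by
  have h1 : 0 ≤ finner (x - y) (x - y) := finner_self_nonneg _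
  have h2 : finner (x + y) (x + y)
      = finner x x + finner x y + finner y x + finner y y := by
    rw [finner_add_left, finner_add_right, finner_add_right]; ring
  have h3 : finner (x - y) (x - y)
      = finner x x - finner x y - finner y x + finner y y := by
    rw [finner_sub_left, finner_sub_right, finner_sub_right]; ring
  linarith

lemma finner_mul_self_ge {a b : ℕ} (x y : Matrix (Fin a) (Fin b) ℝ) :
    -(1/2) * (finner x x + finner y y) ≤ finner x y := by
  have h1 : 0 ≤ finner (x + y) (x + y) := finner_self_nonneg _
  have h2 : finner (x + y) (x + y)
      = finner x x + finner x y + finner y x + finner y y := by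
    rw [finner_add_left, finner_add_right, finner_add_right]; ring
  have h4 : finner y x = finner x y := finner_comm _ _
  linarith

lemma prox_subdiff {a b : ℕ} {f : Matrix (Fin a) (Fin b) ℝ → ℝ}
    (hf : ConvexOn ℝ Set.univ f) {c : ℝ} (hc : 0 < c)
    {R Zp : Matrix (Fin a) (Fin b) ℝ}
    (hmin : ∀ Z, f Zp + c / 2 * finner (Zp - R) (Zp - R)
      ≤ f Z + c / 2 * finner (Z - R) (Z - R)) :
    c • (R - Zp) ∈ subdiff f Zp := by
  intro y
  have key : ∀ t : ℝ, 0 < t → t ≤ 1 →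
      0 ≤ (f y - f Zp + c * finner (Zp - R) (y - Zp)) + c / 2 * t * finner (y - Zp) (y - Zp) := by
    intro t ht ht1
    have hZt := hmin (Zp + t • (y - Zp))
    have hcvx := hf.2 (Set.mem_univ Zp) (Set.mem_univ y)
      (by linarith : (0:ℝ) ≤ 1 - t) ht.le (by ring)
    have heq : (1 - t) • Zp + t • y = Zp + t • (y - Zp) := by
      rw [smul_sub]; rw [sub_smul, one_smul]; abel
    rw [heq] at hcvx
    have hsplit : Zp + t • (y - Zp) - R = (Zp - R) + t • (y - Zp) := by abel
    have hquad : finner (Zp + t • (y - Zp) - R) (Zp + t • (y - Zp) - R)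
        = finner (Zp - R) (Zp - R) + 2 * t * finner (Zp - R) (y - Zp)
          + t * t * finner (y - Zp) (y - Zp) := by
      rw [hsplit, finner_add_left, finner_add_right, finner_add_right,
        finner_smul_left, finner_smul_right, finner_smul_right, finner_smul_left,
        finner_comm (y - Zp) (Zp - R)]
      ring
    rw [hquad] at hZt
    simp only [smul_eq_mul] at hcvx
    nlinarith [hZt, hcvx, ht]
  have hgoal : 0 ≤ f y - f Zp + c * finner (Zp - R) (y - Zp) := by
    by_contra hneg
    push_neg at hneg
    set X := f y - f Zp + c * finner (Zp - R) (y - Zp) with hX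
    set N := finner (y - Zp) (y - Zp) with hN
    have hN0 : 0 ≤ N := finner_self_nonneg _
    set t := min 1 (-X / (c * N + 1)) with htdef
    have hden : 0 < c * N + 1 := by nlinarith
    have ht0 : 0 < t := lt_min one_pos (div_pos (by linarith) hden)
    have ht1 : t ≤ 1 := min_le_left _ _
    have htle : t * (c * N + 1) ≤ -X := by
      have : t ≤ -X / (c * N + 1) := min_le_right _ _
      calc t * (c * N + 1) ≤ (-X / (c * N + 1)) * (c * N + 1) :=
            mul_le_mul_of_nonneg_right this hden.le
        _ = -X := div_mul_cancel₀ _ hden.ne'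
    have hk := key t ht0 ht1
    nlinarith [hk, htle, ht0, hc, hN0]
  have : finner (c • (R - Zp)) (y - Zp) = -(c * finner (Zp - R) (y - Zp)) := by
    rw [finner_smul_left, show R - Zp = -(Zp - R) by abel, finner_neg_left]
    ring
  show f y ≥ f Zp + finner (c • (R - Zp)) (y - Zp)
  rw [this]; linarith

lemma subdiff_mono {a b : ℕ} {f : Matrix (Fin a) (Fin b) ℝ → ℝ}
    {x x' u u' : Matrix (Fin a) (Fin b) ℝ}
    (hu : u ∈ subdiff f x) (hu' : u' ∈ subdiff f x') :
    0 ≤ finner (u - u') (x - x') := by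
  have h1 := hu x'
  have h2 := hu' x
  have e1 : finner u (x' - x) = -finner u (x - x') := by
    rw [show x' - x = -(x - x') by abel, finner_neg_right]
  rw [finner_sub_left]
  rw [e1] at h1
  linarith [h1, h2]

lemma fnorm_sq {a b : ℕ} (M : Matrix (Fin a) (Fin b) ℝ) : fnorm M ^ 2 = finner M M := by
  rw [fnorm, Real.sq_sqrt (finner_self_nonneg M)]

lemma tinner_self_nonneg {m d n : ℕ} (x : Triple m d n) : 0 ≤ tinner x x :=
  add_nonneg (add_nonneg (finner_self_nonneg _) (finner_self_nonneg _)) (finner_self_nonneg _)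

end DLadmmAux
open DLadmmAux in
set_option maxHeartbeats 1000000 in
/-- Lemma 7 of the paper: the classical error bound condition implies the
EBC used in Theorem 3. -/
theorem classical_EBC_implies_EBC {m d n : ℕ} [NeZero m] [NeZero d] [NeZero n]
    (f : Matrix (Fin d) (Fin n) ℝ → ℝ) (g : Matrix (Fin m) (Fin n) ℝ → ℝ)
    (hf : ConvexOn ℝ Set.univ f) (hg : ConvexOn ℝ Set.univ g)
    (A : Matrix (Fin m) (Fin d) ℝ) (X : Matrix (Fin m) (Fin n) ℝ)
    (hne : (OmegaStar f g A X).Nonempty)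
    (hclassical : ∃ κ : ℝ, 0 < κ ∧ ∃ ε : ℝ, 0 < ε ∧
      ∀ ω : Triple m d n, distF ω (OmegaStar f g A X) ≤ ε →
        distF ω (OmegaStar f g A X) ≤ κ *
          sInf {r | ∃ U ∈ subdiff f ω.1, ∃ V ∈ subdiff g ω.2.1,
            r = Real.sqrt (fnorm (Aᵀ * (-ω.2.2) + U) ^ 2 + fnorm (-ω.2.2 + V) ^ 2 +
              fnorm (A * ω.1 + ω.2.1 - X) ^ 2)}) :
    ∃ (θs : Matrix (Fin d) (Fin n) ℝ) (βs : Matrix (Fin m) (Fin n) ℝ),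
      EntrywisePos θs ∧ EntrywisePos βs ∧
      (∀ Z : Matrix (Fin d) (Fin n) ℝ, Z ≠ 0 → 0 < finner (Dop A A θs βs Z) Z) ∧
      ∃ κ' : ℝ, 0 < κ' ∧ ∃ ε' : ℝ, 0 < ε' ∧
        ∀ ω : Triple m d n, distF ω (OmegaStar f g A X) ≤ ε' →
          ∀ ωt : Triple m d n,
            DLADMMStep f g A X A θs βs ω.1 ω.2.1 (-ω.2.2) ωt.1 ωt.2.1 (-ωt.2.2) →
            dist2H A A θs βs ωt (OmegaStar f g A X)
              ≤ κ' / 16 * tinner (ωt - ω) (Hop A A θs βs (ωt - ω)) := by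
  classical
  obtain ⟨κ, hκ, ε, hε, hEB⟩ := hclassical
  obtain ⟨ω0, hω0⟩ := hne
  set Ω := OmegaStar f g A X with hΩdef
  set a2 := finner A A with ha2def
  have ha2 : 0 ≤ a2 := by rw [ha2def]; exact finner_self_nonneg A
  set cc := a2 + 1 with hccdef
  have hcc : 0 < cc := by rw [hccdef]; linarith
  have hcc1 : 1 ≤ cc := by rw [hccdef]; linarith
  set θs : Matrix (Fin d) (Fin n) ℝ := Matrix.of fun _ _ => cc with hθsdef
  set βs : Matrix (Fin m) (Fin n) ℝ := Matrix.of fun _ _ => (1:ℝ) with hβsdef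
  have hadθ : ∀ (M : Matrix (Fin d) (Fin n) ℝ), Matrix.hadamard θs M = cc • M := by
    intro M; ext i j
    simp [hθsdef, Matrix.hadamard_apply]
  have hadβ : ∀ (M : Matrix (Fin m) (Fin n) ℝ), Matrix.hadamard βs M = M := by
    intro M; ext i j; simp [hβsdef, Matrix.hadamard_apply]
  have hrecβ : recip βs = βs := by
    ext i j; simp [recip, hβsdef]
  have hrecθ : ∀ (M : Matrix (Fin d) (Fin n) ℝ),
      Matrix.hadamard (recip θs) M = cc⁻¹ • M := by
    intro M; ext i j; simp [recip, hθsdef, Matrix.hadamard_apply]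
  have hDop : ∀ Z, Dop A A θs βs Z = cc • Z - Aᵀ * (A * Z) := by
    intro Z; rw [Dop, hadθ, hadβ]
  have hHop : ∀ x : Triple m d n,
      Hop A A θs βs x = (cc • x.1 - Aᵀ * (A * x.1), x.2.1, x.2.2) := by
    intro x; rw [Hop, hDop, hadβ, hrecβ, hadβ]
  have hmove : ∀ (M : Matrix (Fin m) (Fin n) ℝ) (N : Matrix (Fin d) (Fin n) ℝ),
      finner (Aᵀ * M) N = finner M (A * N) := by
    intro M N; rw [finner_mul_left Aᵀ M N, Matrix.transpose_transpose]
  have hAbound : ∀ (Z : Matrix (Fin d) (Fin n) ℝ),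
      finner (A * Z) (A * Z) ≤ a2 * finner Z Z := by
    intro Z
    have h := finner_submult A Z
    rw [← ha2def] at h
    exact h
  have hB_eq : ∀ x y : Triple m d n, tinner x (Hop A A θs βs y)
      = cc * finner x.1 y.1 - finner (A * x.1) (A * y.1)
        + finner x.2.1 y.2.1 + finner x.2.2 y.2.2 := by
    intro x y
    rw [hHop y]
    show finner x.1 (cc • y.1 - Aᵀ * (A * y.1)) + finner x.2.1 y.2.1 + finner x.2.2 y.2.2 = _
    rw [finner_sub_right, finner_smul_right, ← finner_mul_left A x.1 (A * y.1)]
  have hQ_lower : ∀ x : Triple m d n, tinner x x ≤ tinner x (Hop A A θs βs x) := by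
    intro x
    rw [hB_eq]
    show finner x.1 x.1 + finner x.2.1 x.2.1 + finner x.2.2 x.2.2 ≤ _
    have e : cc * finner x.1 x.1 = a2 * finner x.1 x.1 + finner x.1 x.1 := by
      rw [hccdef]; ring
    linarith [hAbound x.1, e.le, e.ge]
  have hQ_upper : ∀ x : Triple m d n,
      tinner x (Hop A A θs βs x) ≤ cc * tinner x x := by
    intro x
    rw [hB_eq]
    show _ ≤ cc * (finner x.1 x.1 + finner x.2.1 x.2.1 + finner x.2.2 x.2.2)
    have u2 : finner x.2.1 x.2.1 ≤ cc * finner x.2.1 x.2.1 :=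
      le_mul_of_one_le_left (finner_self_nonneg _) hcc1
    have u3 : finner x.2.2 x.2.2 ≤ cc * finner x.2.2 x.2.2 :=
      le_mul_of_one_le_left (finner_self_nonneg _) hcc1
    have e : cc * (finner x.1 x.1 + finner x.2.1 x.2.1 + finner x.2.2 x.2.2)
        = cc * finner x.1 x.1 + cc * finner x.2.1 x.2.1 + cc * finner x.2.2 x.2.2 := by ring
    linarith [finner_self_nonneg (A * x.1), u2, u3, e.le, e.ge]
  have hQ_nonneg : ∀ x : Triple m d n, 0 ≤ tinner x (Hop A A θs βs x) := by
    intro x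
    have h1 := hQ_lower x
    have h2 : 0 ≤ tinner x x := tinner_self_nonneg x
    linarith
  have hB_addl : ∀ x y z : Triple m d n, tinner (x + y) (Hop A A θs βs z)
      = tinner x (Hop A A θs βs z) + tinner y (Hop A A θs βs z) := by
    intro x y z
    rw [hB_eq, hB_eq, hB_eq]
    simp only [Prod.fst_add, Prod.snd_add, Matrix.mul_add, finner_add_left]
    ring
  have hB_addr : ∀ x y z : Triple m d n, tinner x (Hop A A θs βs (y + z))
      = tinner x (Hop A A θs βs y) + tinner x (Hop A A θs βs z) := by
    intro x y z
    rw [hB_eq, hB_eq, hB_eq]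
    simp only [Prod.fst_add, Prod.snd_add, Matrix.mul_add, finner_add_right]
    ring
  have hB_symm : ∀ x y : Triple m d n,
      tinner x (Hop A A θs βs y) = tinner y (Hop A A θs βs x) := by
    intro x y
    rw [hB_eq, hB_eq, finner_comm x.1 y.1, finner_comm (A * x.1) (A * y.1),
      finner_comm x.2.1 y.2.1, finner_comm x.2.2 y.2.2]
  have hQ_add : ∀ x y : Triple m d n,
      tinner (x + y) (Hop A A θs βs (x + y))
        = tinner x (Hop A A θs βs x) + 2 * tinner x (Hop A A θs βs y)
          + tinner y (Hop A A θs βs y) := by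
    intro x y
    rw [hB_addl, hB_addr, hB_addr, hB_symm y x]
    ring
  have hQ_neg : ∀ x : Triple m d n,
      tinner (-x) (Hop A A θs βs (-x)) = tinner x (Hop A A θs βs x) := by
    intro x
    rw [hB_eq, hB_eq]
    simp only [Prod.fst_neg, Prod.snd_neg, Matrix.mul_neg, finner_neg_left, finner_neg_right]
    ring
  -- distF facts
  have hDFnn : ∀ ω' : Triple m d n, 0 ≤ distF ω' Ω := by
    intro ω'
    rw [distF]
    refine le_csInf ⟨tfnorm (ω' - ω0), ω0, hω0, rfl⟩ ?_
    rintro r ⟨ωs, hs, rfl⟩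
    exact Real.sqrt_nonneg _
  have hDFle : ∀ (ω' : Triple m d n) (ωs : Triple m d n), ωs ∈ Ω →
      distF ω' Ω ≤ tfnorm (ω' - ωs) := by
    intro ω' ωs hs
    rw [distF]
    refine csInf_le ⟨0, ?_⟩ ⟨ωs, hs, rfl⟩
    rintro r ⟨ωs', hs', rfl⟩
    exact Real.sqrt_nonneg _
  have hDFget : ∀ (ω' : Triple m d n) (δ : ℝ), 0 < δ →
      ∃ ωs ∈ Ω, tfnorm (ω' - ωs) < distF ω' Ω + δ := by
    intro ω' δ hδ
    rw [distF]
    obtain ⟨r, hrmem, hlt⟩ := Real.lt_sInf_add_pos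
      (⟨tfnorm (ω' - ω0), ω0, hω0, rfl⟩ :
        Set.Nonempty {r | ∃ ωs ∈ Ω, r = tfnorm (ω' - ωs)}) hδ
    obtain ⟨ωs, hs, rfl⟩ := hrmem
    exact ⟨ωs, hs, hlt⟩
  have hscc : 0 < Real.sqrt cc := Real.sqrt_pos.mpr hcc
  clear_value a2 cc θs βs Ω
  refine ⟨θs, βs, ?_, ?_, ?_, 192 * cc ^ 3 * κ ^ 2, ?_, ε / (2 * Real.sqrt cc), ?_, ?_⟩
  · intro i j; simp [hθsdef]; exact hcc
  · intro i j; simp [hβsdef]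
  · intro Z hZ
    rw [hDop, finner_sub_left, finner_smul_left, hmove]
    have h1 := hAbound Z
    have h2 := finner_self_pos hZ
    have e : cc * finner Z Z = a2 * finner Z Z + finner Z Z := by rw [hccdef]; ring
    linarith [h1, h2, e.le, e.ge]
  · exact mul_pos (mul_pos (by norm_num) (pow_pos hcc 3)) (pow_pos hκ 2)
  · exact div_pos hε (mul_pos two_pos hscc)
  intro ω hω ωt hstep
  obtain ⟨hZmin, hEmin, hlam⟩ := hstep
  rw [hadβ] at hlam
  have hres : ω.2.2 - ωt.2.2 = A * ωt.1 + ωt.2.1 - X := by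
    rw [sub_eq_add_neg, hlam]; abel
  have hsub : ωt.2.2 = ω.2.2 - (A * ωt.1 + ωt.2.1 - X) := by
    rw [← hres]; abel
  -- the Z-update subgradient
  have hR : Rmat A X A θs βs ω.1 ω.2.1 (-ω.2.2)
      = ω.1 - cc⁻¹ • (Aᵀ * (-ω.2.2 + (A * ω.1 + ω.2.1 - X))) := by
    rw [Rmat, hadβ, hrecθ]
  rw [hR] at hZmin
  set Rv := ω.1 - cc⁻¹ • (Aᵀ * (-ω.2.2 + (A * ω.1 + ω.2.1 - X))) with hRvdef
  clear_value Rv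
  have hZmin' : ∀ Z, f ωt.1 + cc / 2 * finner (ωt.1 - Rv) (ωt.1 - Rv)
      ≤ f Z + cc / 2 * finner (Z - Rv) (Z - Rv) := by
    intro Z
    have h := hZmin Z
    rw [hadθ, hadθ, finner_smul_left, finner_smul_left] at h
    simp only [show ∀ q : ℝ, 1 / 2 * (cc * q) = cc / 2 * q from fun q => by ring] at h
    exact h
  have hU : cc • (Rv - ωt.1) ∈ subdiff f ωt.1 := prox_subdiff hf hcc hZmin'
  -- the E-update subgradient
  have hS : Smat A X βs ωt.1 (-ω.2.2) = X - A * ωt.1 - -ω.2.2 := by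
    rw [Smat, hrecβ, hadβ]
  rw [hS] at hEmin
  have hEmin' : ∀ E, g ωt.2.1 + (1:ℝ) / 2 * finner (ωt.2.1 - (X - A * ωt.1 - -ω.2.2))
        (ωt.2.1 - (X - A * ωt.1 - -ω.2.2))
      ≤ g E + (1:ℝ) / 2 * finner (E - (X - A * ωt.1 - -ω.2.2))
        (E - (X - A * ωt.1 - -ω.2.2)) := by
    intro E
    have h := hEmin E
    rw [hadβ, hadβ] at h
    exact h
  have hV1 : (1:ℝ) • ((X - A * ωt.1 - -ω.2.2) - ωt.2.1) ∈ subdiff g ωt.2.1 :=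
    prox_subdiff hg one_pos hEmin'
  have hSE : (1:ℝ) • ((X - A * ωt.1 - -ω.2.2) - ωt.2.1) = ωt.2.2 := by
    rw [one_smul, hsub]; abel
  have hV : ωt.2.2 ∈ subdiff g ωt.2.1 := hSE ▸ hV1
  -- key identity for the first residual
  have hG1 : Aᵀ * (-ωt.2.2) + cc • (Rv - ωt.1)
      = cc • (ω.1 - ωt.1) - Aᵀ * (A * (ω.1 - ωt.1)) - Aᵀ * (ω.2.1 - ωt.2.1) := by
    rw [hRvdef, hsub]
    simp only [smul_sub]
    rw [smul_smul, mul_inv_cancel₀ hcc.ne', one_smul]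
    simp only [Matrix.mul_add, Matrix.mul_sub, Matrix.mul_neg]
    abel
  -- contraction
  have hcontract : ∀ ωs ∈ Ω, tinner (ωt - ωs) (Hop A A θs βs (ωt - ωs))
      ≤ tinner (ω - ωs) (Hop A A θs βs (ω - ωs)) := by
    intro ωs hws
    rw [hΩdef] at hws
    obtain ⟨hs1, hs2, hs3⟩ := hws
    have hM1 : 0 ≤ finner (cc • (Rv - ωt.1) - Aᵀ * ωs.2.2) (ωt.1 - ωs.1) :=
      subdiff_mono hU hs1
    have hM2 : 0 ≤ finner (ωt.2.2 - ωs.2.2) (ωt.2.1 - ωs.2.1) := subdiff_mono hV hs2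
    have hAZt : A * ωt.1 = ω.2.2 - ωt.2.2 - ωt.2.1 + X := by
      rw [hres]; abel
    have hAZs : A * ωs.1 = X - ωs.2.1 := by
      rw [← hs3]; abel
    have hUeq : cc • (Rv - ωt.1) - Aᵀ * ωs.2.2
        = cc • (ω.1 - ωt.1) - Aᵀ * (A * (ω.1 - ωt.1)) - Aᵀ * (ω.2.1 - ωt.2.1)
          + Aᵀ * (ωt.2.2 - ωs.2.2) := by
      have h2 : cc • (Rv - ωt.1)
          = cc • (ω.1 - ωt.1) - Aᵀ * (A * (ω.1 - ωt.1)) - Aᵀ * (ω.2.1 - ωt.2.1)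
            - Aᵀ * (-ωt.2.2) := by
        rw [← hG1]; abel
      rw [h2]
      simp only [Matrix.mul_sub, Matrix.mul_neg]
      abel
    have hcs : -(1/2) * (finner (ω.2.1 - ωt.2.1) (ω.2.1 - ωt.2.1)
          + finner (ω.2.2 - ωt.2.2) (ω.2.2 - ωt.2.2))
        ≤ finner (ω.2.1 - ωt.2.1) (ω.2.2 - ωt.2.2) :=
      finner_mul_self_ge _ _
    have hpos1 : 0 ≤ cc * finner (ω.1 - ωt.1) (ω.1 - ωt.1)
        - finner (A * (ω.1 - ωt.1)) (A * (ω.1 - ωt.1)) := by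
      have e : cc * finner (ω.1 - ωt.1) (ω.1 - ωt.1)
          = a2 * finner (ω.1 - ωt.1) (ω.1 - ωt.1) + finner (ω.1 - ωt.1) (ω.1 - ωt.1) := by
        rw [hccdef]; ring
      linarith [hAbound (ω.1 - ωt.1), finner_self_nonneg (ω.1 - ωt.1), e.le, e.ge]
    rw [hUeq] at hM1
    have hAP : A * (ωt.1 - ωs.1) = (ω.2.2 - ωt.2.2) - (ωt.2.1 - ωs.2.1) := by
      rw [Matrix.mul_sub, hres, ← hs3]; abel
    have hexp : finner (cc • (ω.1 - ωt.1) - Aᵀ * (A * (ω.1 - ωt.1)) - Aᵀ * (ω.2.1 - ωt.2.1)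
          + Aᵀ * (ωt.2.2 - ωs.2.2)) (ωt.1 - ωs.1)
        = cc * finner (ω.1 - ωt.1) (ωt.1 - ωs.1)
          - finner (A * (ω.1 - ωt.1)) (A * (ωt.1 - ωs.1))
          - finner (ω.2.1 - ωt.2.1) (A * (ωt.1 - ωs.1))
          + finner (ωt.2.2 - ωs.2.2) (A * (ωt.1 - ωs.1)) := by
      rw [finner_add_left (cc • (ω.1 - ωt.1) - Aᵀ * (A * (ω.1 - ωt.1)) - Aᵀ * (ω.2.1 - ωt.2.1))
          (Aᵀ * (ωt.2.2 - ωs.2.2)) (ωt.1 - ωs.1),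
        finner_sub_left (cc • (ω.1 - ωt.1) - Aᵀ * (A * (ω.1 - ωt.1)))
          (Aᵀ * (ω.2.1 - ωt.2.1)) (ωt.1 - ωs.1),
        finner_sub_left (cc • (ω.1 - ωt.1)) (Aᵀ * (A * (ω.1 - ωt.1))) (ωt.1 - ωs.1),
        finner_smul_left, hmove, hmove, hmove]
    rw [hexp] at hM1
    have hsplit2 : finner (ω.2.1 - ωt.2.1) (A * (ωt.1 - ωs.1))
        = finner (ω.2.1 - ωt.2.1) (ω.2.2 - ωt.2.2)
          - finner (ω.2.1 - ωt.2.1) (ωt.2.1 - ωs.2.1) := by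
      rw [hAP, finner_sub_right]
    have hsplit3 : finner (ωt.2.2 - ωs.2.2) (A * (ωt.1 - ωs.1))
        = finner (ωt.2.2 - ωs.2.2) (ω.2.2 - ωt.2.2)
          - finner (ωt.2.2 - ωs.2.2) (ωt.2.1 - ωs.2.1) := by
      rw [hAP, finner_sub_right]
    rw [hsplit2, hsplit3] at hM1
    have hcomm3 : finner (ωt.2.2 - ωs.2.2) (ω.2.2 - ωt.2.2)
        = finner (ω.2.2 - ωt.2.2) (ωt.2.2 - ωs.2.2) := finner_comm _ _
    have e1 : ω - ωs = (ω - ωt) + (ωt - ωs) := by abel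
    rw [e1, hQ_add]
    have hcross : -(1/2) * tinner (ω - ωt) (Hop A A θs βs (ω - ωt))
        ≤ tinner (ω - ωt) (Hop A A θs βs (ωt - ωs)) := by
      rw [hB_eq, hB_eq]
      simp only [Prod.fst_sub, Prod.snd_sub]
      linarith only [hM1, hM2, hcs, hpos1, hcomm3]
    linarith [hcross]
  -- Step A : distF ωt Ω ≤ ε
  have hδ1 : (0:ℝ) < ε / (2 * Real.sqrt cc) := div_pos hε (mul_pos two_pos hscc)
  obtain ⟨ωs1, hs1mem, hclose⟩ := hDFget ω (ε / (2 * Real.sqrt cc)) hδ1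
  have hAcontr : tinner (ωt - ωs1) (ωt - ωs1) ≤ cc * tinner (ω - ωs1) (ω - ωs1) := by
    have l1 := hQ_lower (ωt - ωs1)
    have l2 := hcontract ωs1 hs1mem
    have l3 := hQ_upper (ω - ωs1)
    linarith
  have hdistt : distF ωt Ω ≤ ε := by
    have l4 := hDFle ωt ωs1 hs1mem
    have l5 : tfnorm (ωt - ωs1) ≤ Real.sqrt cc * tfnorm (ω - ωs1) := by
      rw [tfnorm, tfnorm, ← Real.sqrt_mul hcc.le]
      exact Real.sqrt_le_sqrt hAcontr
    have l9 : tfnorm (ω - ωs1) ≤ 2 * (ε / (2 * Real.sqrt cc)) := by linarith [hclose, hω]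
    have l8 : Real.sqrt cc * (2 * (ε / (2 * Real.sqrt cc))) = ε := by
      field_simp
    calc distF ωt Ω ≤ tfnorm (ωt - ωs1) := l4
      _ ≤ Real.sqrt cc * tfnorm (ω - ωs1) := l5
      _ ≤ Real.sqrt cc * (2 * (ε / (2 * Real.sqrt cc))) :=
          mul_le_mul_of_nonneg_left l9 hscc.le
      _ = ε := l8
  -- Step B : classical EBC at ωt
  have hEBt := hEB ωt hdistt
  have hmem : Real.sqrt (fnorm (Aᵀ * (-ωt.2.2) + cc • (Rv - ωt.1)) ^ 2
        + fnorm (-ωt.2.2 + ωt.2.2) ^ 2 + fnorm (A * ωt.1 + ωt.2.1 - X) ^ 2)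
      ∈ {r | ∃ U ∈ subdiff f ωt.1, ∃ V ∈ subdiff g ωt.2.1,
          r = Real.sqrt (fnorm (Aᵀ * (-ωt.2.2) + U) ^ 2 + fnorm (-ωt.2.2 + V) ^ 2 +
            fnorm (A * ωt.1 + ωt.2.1 - X) ^ 2)} :=
    ⟨_, hU, _, hV, rfl⟩
  have hbdd : BddBelow {r | ∃ U ∈ subdiff f ωt.1, ∃ V ∈ subdiff g ωt.2.1,
      r = Real.sqrt (fnorm (Aᵀ * (-ωt.2.2) + U) ^ 2 + fnorm (-ωt.2.2 + V) ^ 2 +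
        fnorm (A * ωt.1 + ωt.2.1 - X) ^ 2)} := by
    refine ⟨0, ?_⟩
    rintro r ⟨U, _, V, _, rfl⟩
    exact Real.sqrt_nonneg _
  have hsinf := csInf_le hbdd hmem
  have hval : fnorm (Aᵀ * (-ωt.2.2) + cc • (Rv - ωt.1)) ^ 2
        + fnorm (-ωt.2.2 + ωt.2.2) ^ 2 + fnorm (A * ωt.1 + ωt.2.1 - X) ^ 2
      = finner (cc • (ω.1 - ωt.1) - Aᵀ * (A * (ω.1 - ωt.1)) - Aᵀ * (ω.2.1 - ωt.2.1))
          (cc • (ω.1 - ωt.1) - Aᵀ * (A * (ω.1 - ωt.1)) - Aᵀ * (ω.2.1 - ωt.2.1))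
        + finner (ω.2.2 - ωt.2.2) (ω.2.2 - ωt.2.2) := by
    have hz : -ωt.2.2 + ωt.2.2 = (0 : Matrix (Fin m) (Fin n) ℝ) := by abel
    rw [hG1, hz, ← hres, fnorm_sq, fnorm_sq, fnorm_sq, finner_zero_zero]
    ring
  rw [hval] at hsinf
  have hqnn : 0 ≤ finner (cc • (ω.1 - ωt.1) - Aᵀ * (A * (ω.1 - ωt.1)) - Aᵀ * (ω.2.1 - ωt.2.1))
        (cc • (ω.1 - ωt.1) - Aᵀ * (A * (ω.1 - ωt.1)) - Aᵀ * (ω.2.1 - ωt.2.1))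
      + finner (ω.2.2 - ωt.2.2) (ω.2.2 - ωt.2.2) :=
    add_nonneg (finner_self_nonneg _) (finner_self_nonneg _)
  have hdist : distF ωt Ω ≤ κ * Real.sqrt
      (finner (cc • (ω.1 - ωt.1) - Aᵀ * (A * (ω.1 - ωt.1)) - Aᵀ * (ω.2.1 - ωt.2.1))
          (cc • (ω.1 - ωt.1) - Aᵀ * (A * (ω.1 - ωt.1)) - Aᵀ * (ω.2.1 - ωt.2.1))
        + finner (ω.2.2 - ωt.2.2) (ω.2.2 - ωt.2.2)) :=
    le_trans hEBt (mul_le_mul_of_nonneg_left hsinf hκ.le)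
  have hdist2 : (distF ωt Ω) ^ 2 ≤ κ ^ 2 *
      (finner (cc • (ω.1 - ωt.1) - Aᵀ * (A * (ω.1 - ωt.1)) - Aᵀ * (ω.2.1 - ωt.2.1))
          (cc • (ω.1 - ωt.1) - Aᵀ * (A * (ω.1 - ωt.1)) - Aᵀ * (ω.2.1 - ωt.2.1))
        + finner (ω.2.2 - ωt.2.2) (ω.2.2 - ωt.2.2)) := by
    have h := pow_le_pow_left₀ (hDFnn ωt) hdist 2
    rw [mul_pow, Real.sq_sqrt hqnn] at h
    exact h
  -- bound the residual by the H-seminorm of the step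
  have haccc : a2 ≤ cc := by rw [hccdef]; linarith
  have hs1nn := finner_self_nonneg (ω.1 - ωt.1)
  have hs2nn := finner_self_nonneg (ω.2.1 - ωt.2.1)
  have hs3nn := finner_self_nonneg (ω.2.2 - ωt.2.2)
  have hE : finner Aᵀ Aᵀ = a2 := by rw [finner_transpose_self, ← ha2def]
  have h_h : finner (A * (ω.1 - ωt.1) + (ω.2.1 - ωt.2.1)) (A * (ω.1 - ωt.1) + (ω.2.1 - ωt.2.1))
      ≤ 2 * (a2 * finner (ω.1 - ωt.1) (ω.1 - ωt.1)) + 2 * finner (ω.2.1 - ωt.2.1) (ω.2.1 - ωt.2.1) := by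
    have hf1 := finner_add_sq_le (A * (ω.1 - ωt.1)) (ω.2.1 - ωt.2.1)
    have hg1 := hAbound (ω.1 - ωt.1)
    linarith
  have h_i : finner (Aᵀ * (A * (ω.1 - ωt.1) + (ω.2.1 - ωt.2.1)))
        (Aᵀ * (A * (ω.1 - ωt.1) + (ω.2.1 - ωt.2.1)))
      ≤ a2 * (2 * (a2 * finner (ω.1 - ωt.1) (ω.1 - ωt.1))
          + 2 * finner (ω.2.1 - ωt.2.1) (ω.2.1 - ωt.2.1)) := by
    calc finner (Aᵀ * (A * (ω.1 - ωt.1) + (ω.2.1 - ωt.2.1)))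
          (Aᵀ * (A * (ω.1 - ωt.1) + (ω.2.1 - ωt.2.1)))
        ≤ finner Aᵀ Aᵀ * finner (A * (ω.1 - ωt.1) + (ω.2.1 - ωt.2.1))
            (A * (ω.1 - ωt.1) + (ω.2.1 - ωt.2.1)) := finner_submult _ _
      _ = a2 * finner (A * (ω.1 - ωt.1) + (ω.2.1 - ωt.2.1))
            (A * (ω.1 - ωt.1) + (ω.2.1 - ωt.2.1)) := by rw [hE]
      _ ≤ a2 * (2 * (a2 * finner (ω.1 - ωt.1) (ω.1 - ωt.1))
            + 2 * finner (ω.2.1 - ωt.2.1) (ω.2.1 - ωt.2.1)) :=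
          mul_le_mul_of_nonneg_left h_h ha2
  have e_split : cc • (ω.1 - ωt.1) - Aᵀ * (A * (ω.1 - ωt.1)) - Aᵀ * (ω.2.1 - ωt.2.1)
      = cc • (ω.1 - ωt.1) - Aᵀ * (A * (ω.1 - ωt.1) + (ω.2.1 - ωt.2.1)) := by
    rw [Matrix.mul_add]; abel
  have h_b : finner (cc • (ω.1 - ωt.1)) (cc • (ω.1 - ωt.1))
      = cc * (cc * finner (ω.1 - ωt.1) (ω.1 - ωt.1)) := by
    rw [finner_smul_left, finner_smul_right]
  have hq1 : finner (cc • (ω.1 - ωt.1) - Aᵀ * (A * (ω.1 - ωt.1)) - Aᵀ * (ω.2.1 - ωt.2.1))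
        (cc • (ω.1 - ωt.1) - Aᵀ * (A * (ω.1 - ωt.1)) - Aᵀ * (ω.2.1 - ωt.2.1))
      ≤ 2 * (cc * (cc * finner (ω.1 - ωt.1) (ω.1 - ωt.1)))
        + 2 * (a2 * (2 * (a2 * finner (ω.1 - ωt.1) (ω.1 - ωt.1))
            + 2 * finner (ω.2.1 - ωt.2.1) (ω.2.1 - ωt.2.1))) := by
    rw [e_split]
    have hsq := finner_sub_sq_le (cc • (ω.1 - ωt.1)) (Aᵀ * (A * (ω.1 - ωt.1) + (ω.2.1 - ωt.2.1)))
    linarith [hsq, h_i, h_b.le, h_b.ge]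
  have htxx : tinner (ω - ωt) (ω - ωt)
      = finner (ω.1 - ωt.1) (ω.1 - ωt.1) + finner (ω.2.1 - ωt.2.1) (ω.2.1 - ωt.2.1)
        + finner (ω.2.2 - ωt.2.2) (ω.2.2 - ωt.2.2) := by
    rw [tinner]
    simp only [Prod.fst_sub, Prod.snd_sub]
  have hlow : finner (ω.1 - ωt.1) (ω.1 - ωt.1) + finner (ω.2.1 - ωt.2.1) (ω.2.1 - ωt.2.1)
        + finner (ω.2.2 - ωt.2.2) (ω.2.2 - ωt.2.2)
      ≤ tinner (ω - ωt) (Hop A A θs βs (ω - ωt)) := by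
    have := hQ_lower (ω - ωt)
    rw [htxx] at this
    exact this
  have ha2cc2 : a2 * a2 ≤ cc * cc := mul_le_mul haccc haccc ha2 hcc.le
  have ha2cc2' : a2 ≤ cc * cc :=
    le_trans haccc (by simpa using mul_le_mul_of_nonneg_left hcc1 hcc.le)
  have h1cc2 : 1 ≤ cc * cc := by
    simpa using mul_le_mul hcc1 hcc1 zero_le_one hcc.le
  have hq3 : finner (cc • (ω.1 - ωt.1) - Aᵀ * (A * (ω.1 - ωt.1)) - Aᵀ * (ω.2.1 - ωt.2.1))
        (cc • (ω.1 - ωt.1) - Aᵀ * (A * (ω.1 - ωt.1)) - Aᵀ * (ω.2.1 - ωt.2.1))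
      + finner (ω.2.2 - ωt.2.2) (ω.2.2 - ωt.2.2)
      ≤ 6 * cc ^ 2 * tinner (ω - ωt) (Hop A A θs βs (ω - ωt)) := by
    have t1 := mul_le_mul_of_nonneg_right ha2cc2 hs1nn
    have t2 := mul_le_mul_of_nonneg_right ha2cc2' hs2nn
    have t3 := mul_le_mul_of_nonneg_right h1cc2 hs3nn
    have t4 : 6 * cc ^ 2 * (finner (ω.1 - ωt.1) (ω.1 - ωt.1)
          + finner (ω.2.1 - ωt.2.1) (ω.2.1 - ωt.2.1)
          + finner (ω.2.2 - ωt.2.2) (ω.2.2 - ωt.2.2))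
        ≤ 6 * cc ^ 2 * tinner (ω - ωt) (Hop A A θs βs (ω - ωt)) :=
      mul_le_mul_of_nonneg_left hlow (mul_nonneg (by norm_num) (sq_nonneg cc))
    have t5 : 0 ≤ cc * cc * finner (ω.2.1 - ωt.2.1) (ω.2.1 - ωt.2.1) :=
      mul_nonneg (mul_nonneg hcc.le hcc.le) hs2nn
    have t6 : 0 ≤ cc * cc * finner (ω.2.2 - ωt.2.2) (ω.2.2 - ωt.2.2) :=
      mul_nonneg (mul_nonneg hcc.le hcc.le) hs3nn
    linarith [hq1, t1, t2, t3, t4, t5, t6]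
  -- Step C : dist2H ≤ 2 cc (distF)²
  have hC : ∀ η : ℝ, 0 < η → dist2H A A θs βs ωt Ω ≤ 2 * cc * (distF ωt Ω) ^ 2 + η := by
    intro η hη
    have hδpos : 0 < Real.sqrt (η / (2 * cc)) := Real.sqrt_pos.mpr (div_pos hη (mul_pos two_pos hcc))
    obtain ⟨ωs2, hs2mem, hcl2⟩ := hDFget ωt (Real.sqrt (η / (2 * cc))) hδpos
    have m1 : dist2H A A θs βs ωt Ω ≤ tinner (ωt - ωs2) (Hop A A θs βs (ωt - ωs2)) := by
      rw [dist2H]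
      refine csInf_le ⟨0, ?_⟩ ⟨ωs2, hs2mem, rfl⟩
      rintro r ⟨ωs', hs', rfl⟩
      exact hQ_nonneg _
    have m2 := hQ_upper (ωt - ωs2)
    have m3 : tinner (ωt - ωs2) (ωt - ωs2) = tfnorm (ωt - ωs2) ^ 2 := by
      rw [tfnorm, Real.sq_sqrt (tinner_self_nonneg _)]
    have m4 : tfnorm (ωt - ωs2) ^ 2 ≤ (distF ωt Ω + Real.sqrt (η / (2 * cc))) ^ 2 :=
      pow_le_pow_left₀ (Real.sqrt_nonneg _) hcl2.le 2
    have m6 : Real.sqrt (η / (2 * cc)) ^ 2 = η / (2 * cc) :=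
      Real.sq_sqrt (div_pos hη (mul_pos two_pos hcc)).le
    have m5 : (distF ωt Ω + Real.sqrt (η / (2 * cc))) ^ 2
        ≤ 2 * (distF ωt Ω) ^ 2 + 2 * (η / (2 * cc)) := by
      linarith [sq_nonneg (distF ωt Ω - Real.sqrt (η / (2 * cc))), m6.le, m6.ge]
    have m7 : cc * tinner (ωt - ωs2) (ωt - ωs2)
        ≤ cc * (2 * (distF ωt Ω) ^ 2 + 2 * (η / (2 * cc))) := by
      apply mul_le_mul_of_nonneg_left _ hcc.le
      rw [m3]
      linarith [m4, m5]
    have m8 : cc * (2 * (distF ωt Ω) ^ 2 + 2 * (η / (2 * cc)))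
        = 2 * cc * (distF ωt Ω) ^ 2 + η := by
      field_simp
    linarith [m1, m2, m7, m8.le, m8.ge]
  have hCfin : dist2H A A θs βs ωt Ω ≤ 2 * cc * (distF ωt Ω) ^ 2 :=
    le_of_forall_pos_le_add hC
  -- conclude
  have hflip : tinner (ω - ωt) (Hop A A θs βs (ω - ωt))
      = tinner (ωt - ω) (Hop A A θs βs (ωt - ω)) := by
    have e : ω - ωt = -(ωt - ω) := by abel
    rw [e, hQ_neg]
  calc dist2H A A θs βs ωt Ω ≤ 2 * cc * (distF ωt Ω) ^ 2 := hCfin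
    _ ≤ 2 * cc * (κ ^ 2 *
        (finner (cc • (ω.1 - ωt.1) - Aᵀ * (A * (ω.1 - ωt.1)) - Aᵀ * (ω.2.1 - ωt.2.1))
            (cc • (ω.1 - ωt.1) - Aᵀ * (A * (ω.1 - ωt.1)) - Aᵀ * (ω.2.1 - ωt.2.1))
          + finner (ω.2.2 - ωt.2.2) (ω.2.2 - ωt.2.2))) := by
        apply mul_le_mul_of_nonneg_left hdist2 (by linarith)
    _ ≤ 2 * cc * (κ ^ 2 * (6 * cc ^ 2 * tinner (ω - ωt) (Hop A A θs βs (ω - ωt)))) := by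
        apply mul_le_mul_of_nonneg_left
          (mul_le_mul_of_nonneg_left hq3 (sq_nonneg κ)) (by linarith)
    _ = 192 * cc ^ 3 * κ ^ 2 / 16 * tinner (ω - ωt) (Hop A A θs βs (ω - ωt)) := by ring
    _ = 192 * cc ^ 3 * κ ^ 2 / 16 * tinner (ωt - ω) (Hop A A θs βs (ωt - ω)) := by
        rw [hflip]

end
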